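/- For all x = (x₁,x₂) ∈ ℝ² and y = (y₁,y₂,y₃) ∈ ℝ³, the antisymmetric bilinear bracket on ℝ⁶ with basis e₁,…,e₆ determined by: [e₃,e₅] = (x₁y₂−x₂y₁)e₁ − x₁y₁e₂; [e₃,e₆] = [e₄,e₅] = x₁y₃e₁ − x₂y₁e₂; [e₄,e₆] = x₂y₃e₁ + (x₁y₃−x₂y₂)e₂; [e₁,e₅] = (x₂y₁−x₁y₂)e₃ + x₁y₁e₄; [e₁,e₆] = [e₂,e₅] = −x₁y₃e₃ + x₂y₁e₄; [e₂,e₆] = −x₂y₃e₃ + (x₂y₂−x₁y₃)e₄; [e₁,e₃] = (x₁y₂−x₂y₁)e₅ − x₁y₁e₆; [e₁,e₄] = [e₂,e₃] = x₁y₃e₅ − x₂y₁e₆; [e₂,e₄] = x₂y₃e₅ + (x₁y₃−x₂y₂)e₆; [e₁,e₂] = [e₃,e₄] = [e₅,e₆] = 0, satisfies the Jacobi identity, and hence makes ℝ⁶ into a real Lie algebra (denoted g(x,y)). -/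

import Mathlib

noncomputable section

/-- `Wpair i j v w = vᵢwⱼ − vⱼwᵢ`, the evaluation of `eⁱ∧eʲ` on `(v,w)`. -/
def Wpair (i j : Fin 6) (v w : Fin 6 → ℝ) : ℝ := v i * w j - v j * w i

/-- The antisymmetric bilinear bracket of `g(x,y)` on `ℝ⁶`, determined (in 1-based index
notation) by `[e₃,e₅] = (x₁y₂−x₂y₁)e₁ − x₁y₁e₂`, `[e₃,e₆] = [e₄,e₅] = x₁y₃e₁ − x₂y₁e₂`,
`[e₄,e₆] = x₂y₃e₁ + (x₁y₃−x₂y₂)e₂`, `[e₁,e₅] = (x₂y₁−x₁y₂)e₃ + x₁y₁e₄`,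
`[e₁,e₆] = [e₂,e₅] = −x₁y₃e₃ + x₂y₁e₄`, `[e₂,e₆] = −x₂y₃e₃ + (x₂y₂−x₁y₃)e₄`,
`[e₁,e₃] = (x₁y₂−x₂y₁)e₅ − x₁y₁e₆`, `[e₁,e₄] = [e₂,e₃] = x₁y₃e₅ − x₂y₁e₆`,
`[e₂,e₄] = x₂y₃e₅ + (x₁y₃−x₂y₂)e₆`, `[e₁,e₂] = [e₃,e₄] = [e₅,e₆] = 0`. -/
def brXY (x : Fin 2 → ℝ) (y : Fin 3 → ℝ) (v w : Fin 6 → ℝ) : Fin 6 → ℝ :=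
  ![(x 0 * y 1 - x 1 * y 0) * Wpair 2 4 v w + x 0 * y 2 * (Wpair 2 5 v w + Wpair 3 4 v w) +
      x 1 * y 2 * Wpair 3 5 v w,
    -(x 0 * y 0 * Wpair 2 4 v w) - x 1 * y 0 * (Wpair 2 5 v w + Wpair 3 4 v w) +
      (x 0 * y 2 - x 1 * y 1) * Wpair 3 5 v w,
    (x 1 * y 0 - x 0 * y 1) * Wpair 0 4 v w - x 0 * y 2 * (Wpair 0 5 v w + Wpair 1 4 v w) -
      x 1 * y 2 * Wpair 1 5 v w,
    x 0 * y 0 * Wpair 0 4 v w + x 1 * y 0 * (Wpair 0 5 v w + Wpair 1 4 v w) +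
      (x 1 * y 1 - x 0 * y 2) * Wpair 1 5 v w,
    (x 0 * y 1 - x 1 * y 0) * Wpair 0 2 v w + x 0 * y 2 * (Wpair 0 3 v w + Wpair 1 2 v w) +
      x 1 * y 2 * Wpair 1 3 v w,
    -(x 0 * y 0 * Wpair 0 2 v w) - x 1 * y 0 * (Wpair 0 3 v w + Wpair 1 2 v w) +
      (x 0 * y 2 - x 1 * y 1) * Wpair 1 3 v w]

/-!
Group the coordinates of `ℝ⁶` into three blocks `(v₁,v₂), (v₃,v₄), (v₅,v₆)` of `A = ℝ²`.
In these blocks the bracket of `g(x,y)` is the cross product on `A³` formed with the bilinear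
product `pairMul x y` on `A` (read off from the brackets), which is commutative and associative,
though in general without unit. The usual proof of the Jacobi identity for the cross product
uses nothing about the scalars beyond commutativity and associativity, so it applies verbatim.
-/

section CrossWith

variable {R M : Type*} [CommSemiring R] [AddCommGroup M] [Module R M]

def crossWith (B : M →ₗ[R] M →ₗ[R] M) (a b : Fin 3 → M) : Fin 3 → M :=
  ![B (a 1) (b 2) - B (a 2) (b 1), B (a 2) (b 0) - B (a 0) (b 2), B (a 0) (b 1) - B (a 1) (b 0)]

theorem crossWith_jacobi (B : M →ₗ[R] M →ₗ[R] M) (comm : ∀ a b, B a b = B b a)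
    (assoc : ∀ a b c, B (B a b) c = B a (B b c)) (u v w : Fin 3 → M) :
    crossWith B (crossWith B u v) w + crossWith B (crossWith B v w) u +
      crossWith B (crossWith B w u) v = 0 := by
  have left_comm (a b c : M) : B a (B b c) = B b (B a c) := by
    rw [← assoc, comm a b, assoc]
  ext i
  fin_cases i <;>
    simp only [crossWith, Pi.add_apply, Pi.zero_apply, Fin.zero_eta, Fin.mk_one, Fin.reduceFinMk,
      Matrix.cons_val_zero, Matrix.cons_val_one, Matrix.cons_val, map_sub, LinearMap.sub_apply,
      assoc, comm, left_comm] <;>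
    abel

end CrossWith

def pairMul (x : Fin 2 → ℝ) (y : Fin 3 → ℝ) :
    (Fin 2 → ℝ) →ₗ[ℝ] (Fin 2 → ℝ) →ₗ[ℝ] (Fin 2 → ℝ) :=
  LinearMap.mk₂ ℝ
    (fun a b => ![(x 0 * y 1 - x 1 * y 0) * a 0 * b 0 + x 0 * y 2 * (a 0 * b 1 + a 1 * b 0) +
        x 1 * y 2 * a 1 * b 1,
      -(x 0 * y 0 * a 0 * b 0) - x 1 * y 0 * (a 0 * b 1 + a 1 * b 0) +
        (x 0 * y 2 - x 1 * y 1) * a 1 * b 1])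
    (by intros; ext i; fin_cases i <;>
      simp only [Pi.add_apply, Fin.zero_eta, Fin.mk_one, Matrix.cons_val_zero, Matrix.cons_val_one,
        Matrix.cons_val_fin_one] <;> ring)
    (by intros; ext i; fin_cases i <;>
      simp only [Pi.smul_apply, smul_eq_mul, Fin.zero_eta, Fin.mk_one, Matrix.cons_val_zero,
        Matrix.cons_val_one, Matrix.cons_val_fin_one] <;> ring)
    (by intros; ext i; fin_cases i <;>
      simp only [Pi.add_apply, Fin.zero_eta, Fin.mk_one, Matrix.cons_val_zero, Matrix.cons_val_one,
        Matrix.cons_val_fin_one] <;> ring)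
    (by intros; ext i; fin_cases i <;>
      simp only [Pi.smul_apply, smul_eq_mul, Fin.zero_eta, Fin.mk_one, Matrix.cons_val_zero,
        Matrix.cons_val_one, Matrix.cons_val_fin_one] <;> ring)

theorem pairMul_comm (x : Fin 2 → ℝ) (y : Fin 3 → ℝ) (a b : Fin 2 → ℝ) :
    pairMul x y a b = pairMul x y b a := by
  ext i
  fin_cases i <;>
    simp only [pairMul, LinearMap.mk₂_apply, Fin.zero_eta, Fin.mk_one, Matrix.cons_val_zero,
      Matrix.cons_val_one, Matrix.cons_val_fin_one] <;>
    ring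

theorem pairMul_assoc (x : Fin 2 → ℝ) (y : Fin 3 → ℝ) (a b c : Fin 2 → ℝ) :
    pairMul x y (pairMul x y a b) c = pairMul x y a (pairMul x y b c) := by
  ext i
  fin_cases i <;>
    simp only [pairMul, LinearMap.mk₂_apply, Fin.zero_eta, Fin.mk_one, Matrix.cons_val_zero,
      Matrix.cons_val_one, Matrix.cons_val_fin_one] <;>
    ring

def blocks : (Fin 6 → ℝ) ≃ₗ[ℝ] (Fin 3 → Fin 2 → ℝ) :=
  (LinearEquiv.funCongrLeft ℝ ℝ finProdFinEquiv).trans (LinearEquiv.curry ℝ ℝ (Fin 3) (Fin 2))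

theorem blocks_eq (v : Fin 6 → ℝ) : blocks v = ![![v 0, v 1], ![v 2, v 3], ![v 4, v 5]] := by
  ext i j
  fin_cases i <;> fin_cases j <;> rfl

theorem blocks_brXY (x : Fin 2 → ℝ) (y : Fin 3 → ℝ) (v w : Fin 6 → ℝ) :
    blocks (brXY x y v w) = crossWith (pairMul x y) (blocks v) (blocks w) := by
  ext i j
  fin_cases i <;> fin_cases j <;>
    simp only [blocks_eq, brXY, Wpair, crossWith, pairMul, LinearMap.mk₂_apply, Pi.sub_apply,
      Fin.zero_eta, Fin.mk_one, Fin.reduceFinMk, Matrix.cons_val_zero, Matrix.cons_val_one,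
      Matrix.cons_val, Matrix.cons_val_fin_one] <;>
    ring

/-- The bracket of `g(x,y)` always satisfies the Jacobi identity. -/
theorem stmt2 (x : Fin 2 → ℝ) (y : Fin 3 → ℝ) (u v w : Fin 6 → ℝ) :
    brXY x y (brXY x y u v) w + brXY x y (brXY x y v w) u + brXY x y (brXY x y w u) v = 0 := by
  apply blocks.injective
  simp only [map_add, map_zero, blocks_brXY]
  exact crossWith_jacobi _ (pairMul_comm x y) (pairMul_assoc x y) _ _ _
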